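/- In Q_n, the derivation ∂ with ∂(z_{A,i}) = 1 satisfies ∂Λ_k = (n-k+1)·Λ_{k-1} for each k = 1,...,n, where Λ_k = Λ_k({1,...,n}). -/

import Mathlib

/-!
Every `y_i` is a generator, so `∂ y_i = 1`, and the Leibniz rule turns `∂(y_{i₁} ⋯ y_{i_m})` into
the sum of the `m` words obtained by deleting one factor. Summing over all `m`-subsets, every
`(m-1)`-subset `T` is produced once for each of the `n - (m-1)` elements outside it.
-/

namespace QnPaper

/-- The defining relations of the quadratic algebra `Q_n`:
for `A ⊆ {1,…,n}` and distinct `i, j ∉ A`,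
`z_{A∪{i},j} + z_{A,i} = z_{A∪{j},i} + z_{A,j}` and
`z_{A∪{i},j} * z_{A,i} = z_{A∪{j},i} * z_{A,j}`. -/
inductive QRel (k : Type) [Field k] (n : ℕ) :
    FreeAlgebra k (Finset (Fin n) × Fin n) → FreeAlgebra k (Finset (Fin n) × Fin n) → Prop
  | add_rel (A : Finset (Fin n)) (i j : Fin n) (hi : i ∉ A) (hj : j ∉ A) (hij : i ≠ j) :
      QRel k n (FreeAlgebra.ι k (insert i A, j) + FreeAlgebra.ι k (A, i))
        (FreeAlgebra.ι k (insert j A, i) + FreeAlgebra.ι k (A, j))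
  | mul_rel (A : Finset (Fin n)) (i j : Fin n) (hi : i ∉ A) (hj : j ∉ A) (hij : i ≠ j) :
      QRel k n (FreeAlgebra.ι k (insert i A, j) * FreeAlgebra.ι k (A, i))
        (FreeAlgebra.ι k (insert j A, i) * FreeAlgebra.ι k (A, j))

/-- The quadratic algebra `Q_n`. -/
abbrev Q (k : Type) [Field k] (n : ℕ) := RingQuot (QRel k n)

/-- The generator `z_{A,i}` of `Q_n` (only meaningful when `i ∉ A`). -/
def z (k : Type) [Field k] (n : ℕ) (A : Finset (Fin n)) (i : Fin n) : Q k n :=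
  RingQuot.mkAlgHom k (QRel k n) (FreeAlgebra.ι k (A, i))
/-- `y_i = z_{{1,…,i-1},i}`. -/
def y (k : Type) [Field k] (n : ℕ) (i : Fin n) : Q k n := z k n (Finset.Iio i) i
/-- `Λ_m = ∑_{i₁ > ⋯ > i_m} y_{i₁}⋯y_{i_m}` where `y_i = z_{{1,…,i-1},i}`. -/
noncomputable def LamSum (k : Type) [Field k] (n : ℕ) (m : ℕ) : Q k n :=
  ∑ S ∈ Finset.powersetCard m (Finset.univ : Finset (Fin n)),
    ((S.sort (· ≤ ·)).reverse.map (y k n)).prod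

open Finset

section DescProd

variable {ι A : Type*} [LinearOrder ι] [Ring A]

def descProd (f : ι → A) (S : Finset ι) : A :=
  ((S.sort (· ≤ ·)).reverse.map f).prod

theorem descProd_empty (f : ι → A) : descProd f ∅ = 1 := by
  simp [descProd]

theorem descProd_insert_of_forall_lt (f : ι → A) {a : ι} {S : Finset ι} (h : ∀ x ∈ S, a < x) :
    descProd f (insert a S) = descProd f S * f a := by
  have ha : a ∉ S := fun haS => (h a haS).false
  rw [descProd, sort_insert (· ≤ ·) (fun b hb => (h b hb).le) ha]
  simp [descProd]

theorem map_one_eq_zero_of_leibniz {d : A → A} (hleib : ∀ a b, d (a * b) = d a * b + a * d b) :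
    d 1 = 0 := by
  simpa using hleib 1 1

theorem leibniz_descProd {d : A → A} (hleib : ∀ a b, d (a * b) = d a * b + a * d b)
    {f : ι → A} (hf : ∀ i, d (f i) = 1) (S : Finset ι) :
    d (descProd f S) = ∑ x ∈ S, descProd f (S.erase x) := by
  induction S using Finset.induction_on_min with
  | empty => rw [descProd_empty, map_one_eq_zero_of_leibniz hleib, sum_empty]
  | insert a S hlt ih =>
    have ha : a ∉ S := fun haS => (hlt a haS).false
    have herase : ∀ x ∈ S, descProd f ((insert a S).erase x) = descProd f (S.erase x) * f a := by
      intro x hx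
      rw [erase_insert_of_ne (ne_of_mem_of_not_mem hx ha).symm,
        descProd_insert_of_forall_lt f fun b hb => hlt b (mem_of_mem_erase hb)]
    rw [descProd_insert_of_forall_lt f hlt, hleib, ih, hf, mul_one, sum_insert ha,
      erase_insert ha, sum_congr rfl herase, ← sum_mul, add_comm]

end DescProd

theorem sum_powersetCard_succ_sum_erase {ι M : Type*} [DecidableEq ι] [AddCommMonoid M]
    (s : Finset ι) (m : ℕ) (g : Finset ι → M) :
    ∑ S ∈ s.powersetCard (m + 1), ∑ x ∈ S, g (S.erase x) =
      (#s - m) • ∑ T ∈ s.powersetCard m, g T := by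
  calc ∑ S ∈ s.powersetCard (m + 1), ∑ x ∈ S, g (S.erase x)
      = ∑ p ∈ (s.powersetCard (m + 1)).sigma id, g (p.1.erase p.2) := by rw [sum_sigma]; rfl
    _ = ∑ p ∈ (s.powersetCard m).sigma (s \ ·), g p.1 := by
      refine sum_bij' (fun p _ => ⟨p.1.erase p.2, p.2⟩) (fun p _ => ⟨insert p.2 p.1, p.2⟩)
        ?_ ?_ ?_ ?_ fun _ _ => rfl
      all_goals
        rintro ⟨S, x⟩ hp
        simp only [mem_sigma, mem_powersetCard, id, mem_sdiff] at hp
      · simp only [mem_sigma, mem_powersetCard, mem_sdiff, mem_erase, ne_eq, not_true,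
          false_and, not_false_eq_true, and_true]
        exact ⟨⟨(erase_subset x S).trans hp.1.1, by rw [card_erase_of_mem hp.2, hp.1.2]; rfl⟩,
          hp.1.1 hp.2⟩
      · simp only [mem_sigma, mem_powersetCard, id, mem_insert_self, and_true]
        exact ⟨insert_subset hp.2.1 hp.1.1, by rw [card_insert_of_notMem hp.2.2, hp.1.2]⟩
      · simp [insert_erase hp.2]
      · simp [erase_insert hp.2.2]
    _ = ∑ T ∈ s.powersetCard m, ∑ _x ∈ s \ T, g T := sum_sigma _ _ _
    _ = (#s - m) • ∑ T ∈ s.powersetCard m, g T := by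
      rw [smul_sum]
      refine sum_congr rfl fun T hT => ?_
      rw [mem_powersetCard] at hT
      rw [sum_const, card_sdiff_of_subset hT.1, hT.2]

/-- Any derivation `∂` of `Q_n` with `∂(z_{A,i}) = 1` satisfies
`∂Λ_m = (n - m + 1)·Λ_{m-1}` for `1 ≤ m ≤ n`. -/
theorem stmt13 (k : Type) [Field k] (n : ℕ) (d : Q k n →ₗ[k] Q k n)
    (hleib : ∀ a b : Q k n, d (a * b) = d a * b + a * d b)
    (hgen : ∀ (A : Finset (Fin n)) (i : Fin n), i ∉ A → d (z k n A i) = 1)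
    (m : ℕ) (hm1 : 1 ≤ m) (hmn : m ≤ n) :
    d (LamSum k n m) = (n - m + 1) • LamSum k n (m - 1) := by
  obtain ⟨m, rfl⟩ := Nat.exists_eq_add_of_le' hm1
  have hLam : ∀ j, LamSum k n j = ∑ S ∈ univ.powersetCard j, descProd (y k n) S := fun _ => rfl
  have hy : ∀ i, d (y k n i) = 1 := fun i => hgen _ i notMem_Iio_self
  rw [hLam, hLam, map_sum, sum_congr rfl fun S _ => leibniz_descProd hleib hy S,
    sum_powersetCard_succ_sum_erase, card_univ, Fintype.card_fin, Nat.add_sub_cancel]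
  congr 1
  omega

end QnPaper
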